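/- arXiv:2210.11466 — 4 statements merged into one kernel-verified Lean document; each statement's English description precedes it below -/
import Mathlib

section
/- Fix data points (x₁, y₁), …, (xₙ, yₙ) ∈ ℝ^d × ℝ. Let v : ℝ → ℝ and b : ℝ → ℝ^d be differentiable curves satisfying, for every t ∈ ℝ, the full fine-tuning gradient-flow equations v′(t) = −∑_{i=1}^n 2(v(t)⟨b(t), xᵢ⟩ − yᵢ)·⟨b(t), xᵢ⟩ and b′(t) = −∑_{i=1}^n 2(v(t)⟨b(t), xᵢ⟩ − yᵢ)·v(t)·xᵢ. Then the balancedness quantity is conserved: for all t ∈ ℝ, v(t)² − ‖b(t)‖² = v(0)² − ‖b(0)‖². -/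
open scoped RealInnerProductSpace

/-- **Balancedness is conserved under full fine-tuning gradient flow.**
For a two-layer linear network `f_{v,b}(x) = v ⟨b, x⟩` with one-dimensional representation,
if `(v(t), b(t))` solves the gradient flow of the empirical squared loss
`∑ᵢ (v ⟨b, xᵢ⟩ − yᵢ)²` in both layers, then `v(t)² − ‖b(t)‖²` is constant in `t`. -/
theorem full_fine_tuning_balancedness_conserved
    (d n : ℕ) (x : Fin n → EuclideanSpace ℝ (Fin d)) (y : Fin n → ℝ)
    (v : ℝ → ℝ) (b : ℝ → EuclideanSpace ℝ (Fin d))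
    (hv : ∀ t : ℝ, HasDerivAt v
      (-(∑ i, 2 * (v t * ⟪b t, x i⟫ - y i) * ⟪b t, x i⟫)) t)
    (hb : ∀ t : ℝ, HasDerivAt b
      (-(∑ i, (2 * (v t * ⟪b t, x i⟫ - y i) * v t) • x i)) t) :
    ∀ t : ℝ, v t ^ 2 - ‖b t‖ ^ 2 = v 0 ^ 2 - ‖b 0‖ ^ 2 := by
  have key : ∀ t : ℝ, HasDerivAt (fun t => v t ^ 2 - ‖b t‖ ^ 2) 0 t := by
    intro t
    have h1 : HasDerivAt (fun t => v t ^ 2)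
        ((2 : ℕ) * v t ^ 1 * (-(∑ i, 2 * (v t * ⟪b t, x i⟫ - y i) * ⟪b t, x i⟫))) t :=
      (hv t).pow 2
    have h2 : HasDerivAt (fun t => ⟪b t, b t⟫)
        (⟪b t, (-(∑ i, (2 * (v t * ⟪b t, x i⟫ - y i) * v t) • x i))⟫
          + ⟪(-(∑ i, (2 * (v t * ⟪b t, x i⟫ - y i) * v t) • x i)), b t⟫) t :=
      (hb t).inner ℝ (hb t)
    have h2' : HasDerivAt (fun t => ‖b t‖ ^ 2)
        (⟪b t, (-(∑ i, (2 * (v t * ⟪b t, x i⟫ - y i) * v t) • x i))⟫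
          + ⟪(-(∑ i, (2 * (v t * ⟪b t, x i⟫ - y i) * v t) • x i)), b t⟫) t := by
      simpa only [real_inner_self_eq_norm_sq] using h2
    have h := h1.sub h2'
    have hsum : ⟪b t, (∑ i, (2 * (v t * ⟪b t, x i⟫ - y i) * v t) • x i)⟫
        = v t * ∑ i, 2 * (v t * ⟪b t, x i⟫ - y i) * ⟪b t, x i⟫ := by
      rw [inner_sum, Finset.mul_sum]
      exact Finset.sum_congr rfl fun i _ => by rw [real_inner_smul_right]; ring
    have heq : ((2 : ℕ) * v t ^ 1 * (-(∑ i, 2 * (v t * ⟪b t, x i⟫ - y i) * ⟪b t, x i⟫)))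
        - (⟪b t, (-(∑ i, (2 * (v t * ⟪b t, x i⟫ - y i) * v t) • x i))⟫
          + ⟪(-(∑ i, (2 * (v t * ⟪b t, x i⟫ - y i) * v t) • x i)), b t⟫) = 0 := by
      have hc1 : ⟪b t, (-(∑ i, (2 * (v t * ⟪b t, x i⟫ - y i) * v t) • x i))⟫
          = -(v t * ∑ i, 2 * (v t * ⟪b t, x i⟫ - y i) * ⟪b t, x i⟫) := by
        rw [inner_neg_right, hsum]
      have hc2 : ⟪(-(∑ i, (2 * (v t * ⟪b t, x i⟫ - y i) * v t) • x i)), b t⟫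
          = -(v t * ∑ i, 2 * (v t * ⟪b t, x i⟫ - y i) * ⟪b t, x i⟫) := by
        rw [real_inner_comm, inner_neg_right, hsum]
      rw [hc1, hc2]
      push_cast
      ring
    rw [heq] at h
    exact h
  intro t
  have : ∀ s : ℝ, (fun t => v t ^ 2 - ‖b t‖ ^ 2) s = (fun t => v t ^ 2 - ‖b t‖ ^ 2) 0 := by
    intro s
    apply is_const_of_deriv_eq_zero (fun u => (key u).differentiableAt)
    intro u
    exact (key u).deriv
  exact this t
end

section
/- Fix data points (x₁, y₁), …, (xₙ, yₙ) ∈ ℝ^d × ℝ. Let v : ℝ → ℝ and b : ℝ → ℝ^d be differentiable curves satisfying, for every t ∈ ℝ, the full fine-tuning gradient-flow equations v′(t) = −∑_{i=1}^n 2(v(t)⟨b(t), xᵢ⟩ − yᵢ)·⟨b(t), xᵢ⟩ and b′(t) = −∑_{i=1}^n 2(v(t)⟨b(t), xᵢ⟩ − yᵢ)·v(t)·xᵢ. If x_s ∈ ℝ^d is orthogonal to every training input, ⟨x_s, xᵢ⟩ = 0 for all i, then ⟨b(t), x_s⟩ = ⟨b(0), x_s⟩ for all t ∈ ℝ. -/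
open scoped RealInnerProductSpace

/-- **Full fine-tuning gradient flow preserves the feature component orthogonal to the
training data.** For a two-layer linear network `f_{v,b}(x) = v ⟨b, x⟩` with one-dimensional
representation, if `(v(t), b(t))` solves the gradient flow of the empirical squared loss
`∑ᵢ (v ⟨b, xᵢ⟩ − yᵢ)²` in both layers, and `x_s` is orthogonal to every training input,
then `⟨b(t), x_s⟩ = ⟨b(0), x_s⟩` for all `t`. -/
theorem full_fine_tuning_preserves_orthogonal_component
    (d n : ℕ) (x : Fin n → EuclideanSpace ℝ (Fin d)) (y : Fin n → ℝ)
    (v : ℝ → ℝ) (b : ℝ → EuclideanSpace ℝ (Fin d))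
    (hv : ∀ t : ℝ, HasDerivAt v
      (-(∑ i, 2 * (v t * ⟪b t, x i⟫ - y i) * ⟪b t, x i⟫)) t)
    (hb : ∀ t : ℝ, HasDerivAt b
      (-(∑ i, (2 * (v t * ⟪b t, x i⟫ - y i) * v t) • x i)) t)
    (xs : EuclideanSpace ℝ (Fin d)) (hxs : ∀ i, ⟪xs, x i⟫ = 0) :
    ∀ t : ℝ, ⟪b t, xs⟫ = ⟪b 0, xs⟫ := by
  have key : ∀ t : ℝ, HasDerivAt (fun t => ⟪b t, xs⟫) 0 t := by
    intro t
    have h := (hb t).inner ℝ (hasDerivAt_const t xs)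
    have hz : ⟪(∑ i, (2 * (v t * ⟪b t, x i⟫ - y i) * v t) • x i : EuclideanSpace ℝ (Fin d)), xs⟫ = (0:ℝ) := by
      rw [sum_inner]
      refine Finset.sum_eq_zero fun i _ => ?_
      rw [real_inner_smul_left, show ⟪x i, xs⟫ = (0:ℝ) from by
        rw [real_inner_comm]; exact hxs i, mul_zero]
    rw [inner_zero_right, inner_neg_left, hz, neg_zero, zero_add] at h
    exact h
  intro t
  have : ∀ s : ℝ, (fun t => ⟪b t, xs⟫) s = (fun t => ⟪b t, xs⟫) 0 := by
    intro s
    exact is_const_of_deriv_eq_zero (fun u => (key u).differentiableAt)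
      (fun u => (key u).deriv) s 0
  exact this t
end

section
/- Fix data points (x₁, y₁), …, (xₙ, yₙ) ∈ ℝ^d × ℝ. Let v : ℝ → ℝ and b : ℝ → ℝ^d be differentiable curves satisfying, for every t ∈ ℝ, the full fine-tuning gradient-flow equations v′(t) = −∑_{i=1}^n 2(v(t)⟨b(t), xᵢ⟩ − yᵢ)·⟨b(t), xᵢ⟩ and b′(t) = −∑_{i=1}^n 2(v(t)⟨b(t), xᵢ⟩ − yᵢ)·v(t)·xᵢ. Suppose x_s ∈ ℝ^d is orthogonal to every training input (⟨x_s, xᵢ⟩ = 0 for all i) and ⟨b(0), x_s⟩ ≠ 0. Then for every t ∈ ℝ with v(t) ≠ v(0), the prediction on x_s changes: v(t)·⟨b(t), x_s⟩ ≠ v(0)·⟨b(0), x_s⟩. In particular, if the pretrained model is correct on x_s, i.e. v(0)·⟨b(0), x_s⟩ = y_s, then full fine-tuning incurs strictly positive squared loss (v(t)·⟨b(t), x_s⟩ − y_s)² > 0 whenever the head has changed (v(t) ≠ v(0)). -/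
open scoped RealInnerProductSpace

/-- **Full fine-tuning forgets: a changed head changes predictions on directions orthogonal
to the fine-tuning data.** For a two-layer linear network `f_{v,b}(x) = v ⟨b, x⟩` with
one-dimensional representation, let `(v(t), b(t))` solve the gradient flow of the empirical
squared loss `∑ᵢ (v ⟨b, xᵢ⟩ − yᵢ)²` in both layers. If `x_s` is orthogonal to every training
input and `⟨b(0), x_s⟩ ≠ 0`, then whenever `v(t) ≠ v(0)` the prediction on `x_s` changes,
and if the pretrained model was correct on `x_s` (`v(0) ⟨b(0), x_s⟩ = y_s`), the squared loss
on `(x_s, y_s)` is strictly positive. -/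
theorem full_fine_tuning_positive_loss_on_orthogonal_direction
    (d n : ℕ) (x : Fin n → EuclideanSpace ℝ (Fin d)) (y : Fin n → ℝ)
    (v : ℝ → ℝ) (b : ℝ → EuclideanSpace ℝ (Fin d))
    (hv : ∀ t : ℝ, HasDerivAt v
      (-(∑ i, 2 * (v t * ⟪b t, x i⟫ - y i) * ⟪b t, x i⟫)) t)
    (hb : ∀ t : ℝ, HasDerivAt b
      (-(∑ i, (2 * (v t * ⟪b t, x i⟫ - y i) * v t) • x i)) t)
    (xs : EuclideanSpace ℝ (Fin d)) (hxs : ∀ i, ⟪xs, x i⟫ = 0)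
    (hb0 : ⟪b 0, xs⟫ ≠ 0) :
    (∀ t : ℝ, v t ≠ v 0 → v t * ⟪b t, xs⟫ ≠ v 0 * ⟪b 0, xs⟫) ∧
    (∀ ys : ℝ, v 0 * ⟪b 0, xs⟫ = ys →
      ∀ t : ℝ, v t ≠ v 0 → 0 < (v t * ⟪b t, xs⟫ - ys) ^ 2) := by
  -- ⟪b t, xs⟫ is constant in t
  have hg : ∀ t : ℝ, HasDerivAt (fun t => ⟪b t, xs⟫) 0 t := by
    intro t
    have h := ((hb t).inner ℝ (hasDerivAt_const t xs))
    have hz : ⟪b t, (0 : EuclideanSpace ℝ (Fin d))⟫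
        + ⟪-(∑ i, (2 * (v t * ⟪b t, x i⟫ - y i) * v t) • x i), xs⟫ = 0 := by
      rw [inner_zero_right, inner_neg_left, sum_inner]
      simp only [real_inner_smul_left]
      have : ∀ i, ⟪x i, xs⟫ = (0 : ℝ) := fun i => by
        rw [real_inner_comm]; exact hxs i
      simp [this]
    rw [← hz]
    exact h
  have hconst : ∀ t : ℝ, ⟪b t, xs⟫ = ⟪b 0, xs⟫ := by
    intro t
    have : ∀ s : ℝ, deriv (fun t => ⟪b t, xs⟫) s = 0 :=
      fun s => (hg s).deriv
    exact is_const_of_deriv_eq_zero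
      (fun s => (hg s).differentiableAt) this t 0
  have main : ∀ t : ℝ, v t ≠ v 0 → v t * ⟪b t, xs⟫ ≠ v 0 * ⟪b 0, xs⟫ := by
    intro t hvt heq
    rw [hconst t] at heq
    exact hvt (mul_right_cancel₀ hb0 heq)
  refine ⟨main, fun ys hys t hvt => ?_⟩
  have := main t hvt
  rw [hys] at this
  have hne : v t * ⟪b t, xs⟫ - ys ≠ 0 := sub_ne_zero.mpr this
  positivity
end

section
/- Let S and T be subspaces of ℝ^d with T contained in the orthogonal complement of S, let w* ∈ ℝ^d be the ground-truth predictor (labels y(x) = ⟨w*, x⟩), let v̂ ∈ ℝ^k, and let B̂, B ∈ ℝ^{k×d}. Let x₁, …, xₙ ∈ ℝ^d be training inputs, each lying in S or in T. Assume: (i) v̂ᵀB̂x = ⟨w*, x⟩ for all x ∈ S (the pretrained model has zero loss on the source subspace); (ii) v̂ᵀB xᵢ = ⟨w*, xᵢ⟩ for all i = 1, …, n (zero empirical loss after first-layer tuning); (iii) B x = B̂ x for every x ∈ ℝ^d orthogonal to all of x₁, …, xₙ (first-layer tuning preserves directions orthogonal to the training data); and (iv) T ⊆ span{x₁, …, xₙ}.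 Then v̂ᵀB x = ⟨w*, x⟩ for every x ∈ S ∪ T; that is, the first-layer-tuned model attains zero squared loss on every point of the source subspace and of the orthogonal target subspace. -/
open Matrix
open scoped InnerProductSpace

/-! The error vector `a = vhᵀB - w⋆` of the tuned model vanishes on the training inputs, while
`b = vhᵀB̂ - w⋆` vanishes on `S`, and `⟪a, ·⟫ = ⟪b, ·⟫` off the training inputs. Then `a ⊥ T` since
`T` lies in the span of the data. For `z ∈ S`, split `z = p + q` with `p` in the span of the
training inputs lying in `S` and `q` orthogonal to them; then `q ∈ S`, and `q ⊥ T` because `S ⊥ T`,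
so `q` is orthogonal to all training inputs and `⟪a, z⟫ = ⟪a, p⟫ + ⟪b, q⟫ = 0`. -/

section InnerProductSpace

open Submodule Set

variable {E ι : Type*} [NormedAddCommGroup E] [InnerProductSpace ℝ E]
  {S T : Submodule ℝ E} {x : ι → E} {a b : E}

theorem span_range_le_orthogonal_singleton (ha : ∀ i, ⟪a, x i⟫_ℝ = 0) :
    span ℝ (range x) ≤ (ℝ ∙ a)ᗮ :=
  span_le.mpr <| range_subset_iff.mpr fun i => mem_orthogonal_singleton_iff_inner_right.mpr (ha i)

theorem inner_eq_zero_of_mem_source [FiniteDimensional ℝ E] (hST : S ⟂ T)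
    (hx : ∀ i, x i ∈ S ∨ x i ∈ T) (ha : ∀ i, ⟪a, x i⟫_ℝ = 0) (hb : ∀ s ∈ S, ⟪b, s⟫_ℝ = 0)
    (hab : ∀ z, (∀ i, ⟪z, x i⟫_ℝ = 0) → ⟪a, z⟫_ℝ = ⟪b, z⟫_ℝ) {z : E} (hz : z ∈ S) :
    ⟪a, z⟫_ℝ = 0 := by
  set W := span ℝ (x '' {i | x i ∈ S})
  obtain ⟨p, hpW, q, hqW, rfl⟩ := W.exists_add_mem_mem_orthogonal z
  have hWS : W ≤ S := span_le.mpr <| image_subset_iff.mpr fun i hi => hi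
  have hqS : q ∈ S := by simpa using S.sub_mem hz (hWS hpW)
  have hqx : ∀ i, ⟪q, x i⟫_ℝ = 0 := fun i =>
    (hx i).elim (fun hi => inner_left_of_mem_orthogonal (subset_span (mem_image_of_mem x hi)) hqW)
      (hST.inner_eq hqS)
  have hpa : p ∈ (ℝ ∙ a)ᗮ :=
    span_range_le_orthogonal_singleton ha <| span_mono (image_subset_range _ _) hpW
  rw [inner_add_right, mem_orthogonal_singleton_iff_inner_right.mp hpa, hab q hqx, hb q hqS,
    add_zero]

theorem inner_eq_zero_of_mem_source_or_orthogonal [FiniteDimensional ℝ E] (hST : S ⟂ T)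
    (hx : ∀ i, x i ∈ S ∨ x i ∈ T) (ha : ∀ i, ⟪a, x i⟫_ℝ = 0) (hb : ∀ s ∈ S, ⟪b, s⟫_ℝ = 0)
    (hab : ∀ z, (∀ i, ⟪z, x i⟫_ℝ = 0) → ⟪a, z⟫_ℝ = ⟪b, z⟫_ℝ) (hT : T ≤ span ℝ (range x))
    (z : E) (hz : z ∈ S ∨ z ∈ T) : ⟪a, z⟫_ℝ = 0 :=
  hz.elim (inner_eq_zero_of_mem_source hST hx ha hb hab) fun hzT =>
    mem_orthogonal_singleton_iff_inner_right.mp (span_range_le_orthogonal_singleton ha (hT hzT))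

end InnerProductSpace

theorem dotProduct_eq_zero_of_mem_source_or_orthogonal {d : ℕ} {ι : Type*}
    {S T : Submodule ℝ (Fin d → ℝ)} (hST : ∀ s ∈ S, ∀ t ∈ T, s ⬝ᵥ t = 0) {x : ι → Fin d → ℝ}
    (hx : ∀ i, x i ∈ S ∨ x i ∈ T) {a b : Fin d → ℝ} (ha : ∀ i, a ⬝ᵥ x i = 0)
    (hb : ∀ s ∈ S, b ⬝ᵥ s = 0) (hab : ∀ z, (∀ i, z ⬝ᵥ x i = 0) → a ⬝ᵥ z = b ⬝ᵥ z)
    (hT : T ≤ Submodule.span ℝ (Set.range x)) (z : Fin d → ℝ) (hz : z ∈ S ∨ z ∈ T) :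
    a ⬝ᵥ z = 0 := by
  let e := WithLp.linearEquiv 2 ℝ (Fin d → ℝ)
  have inner_eq (u v : EuclideanSpace ℝ (Fin d)) : ⟪u, v⟫_ℝ = u.ofLp ⬝ᵥ v.ofLp := by
    rw [EuclideanSpace.inner_eq_star_dotProduct, star_trivial, dotProduct_comm]
  have hST' : S.comap e.toLinearMap ⟂ T.comap e.toLinearMap :=
    Submodule.isOrtho_iff_inner_eq.mpr fun u hu v hv => (inner_eq u v).trans (hST _ hu _ hv)
  have hT' : T.comap e.toLinearMap ≤ Submodule.span ℝ (Set.range (WithLp.toLp 2 ∘ x)) :=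
    fun u hu => by
      rw [Set.range_comp]
      exact Submodule.apply_mem_span_image_of_mem_span e.symm.toLinearMap (hT hu)
  have hab' (u : EuclideanSpace ℝ (Fin d)) (hu : ∀ i, ⟪u, WithLp.toLp 2 (x i)⟫_ℝ = 0) :
      ⟪WithLp.toLp 2 a, u⟫_ℝ = ⟪WithLp.toLp 2 b, u⟫_ℝ := by
    simpa only [inner_eq] using hab u.ofLp fun i => (inner_eq _ _).symm.trans (hu i)
  have key := inner_eq_zero_of_mem_source_or_orthogonal hST' (x := WithLp.toLp 2 ∘ x) hx
    (fun i => (inner_eq _ _).trans (ha i)) (fun s hs => (inner_eq _ s).trans (hb _ hs)) hab' hT'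
    (WithLp.toLp 2 z) hz
  rwa [inner_eq] at key

/-- **First-layer tuning achieves zero loss on the source subspace and on the orthogonal
target subspace.** Let `S, T` be subspaces of `ℝ^d` with `T` orthogonal to `S` (w.r.t. the
standard inner product, here the dot product), let labels be given by `y(x) = ⟨w⋆, x⟩`, and
let the training inputs `x₁,…,xₙ` each lie in `S` or in `T`. If (i) the pretrained model
`x ↦ vhᵀ Bh x` equals `⟨w⋆, ·⟩` on `S`, (ii) the tuned model `x ↦ vhᵀ B x` fits every
training point, (iii) `B` agrees with `Bh` on every vector orthogonal to all training
inputs, and (iv) `T ⊆ span{x₁,…,xₙ}`, then `vhᵀ B x = ⟨w⋆, x⟩` for every `x ∈ S ∪ T`. -/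
theorem first_layer_tuning_zero_loss_on_source_and_orthogonal
    (k d n : ℕ) (S T : Submodule ℝ (Fin d → ℝ))
    (hST : ∀ s ∈ S, ∀ t ∈ T, s ⬝ᵥ t = 0)
    (wstar : Fin d → ℝ) (vh : Fin k → ℝ)
    (Bh B : Matrix (Fin k) (Fin d) ℝ)
    (x : Fin n → Fin d → ℝ)
    (hx : ∀ i, x i ∈ S ∨ x i ∈ T)
    (hpre : ∀ z ∈ S, vh ⬝ᵥ Bh.mulVec z = wstar ⬝ᵥ z)
    (hfit : ∀ i, vh ⬝ᵥ B.mulVec (x i) = wstar ⬝ᵥ x i)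
    (horth : ∀ z : Fin d → ℝ, (∀ i, z ⬝ᵥ x i = 0) → B.mulVec z = Bh.mulVec z)
    (hspan : T ≤ Submodule.span ℝ (Set.range x)) :
    ∀ z : Fin d → ℝ, z ∈ S ∨ z ∈ T → vh ⬝ᵥ B.mulVec z = wstar ⬝ᵥ z := by
  have error_eq (M : Matrix (Fin k) (Fin d) ℝ) (z : Fin d → ℝ) :
      vh ⬝ᵥ M *ᵥ z - wstar ⬝ᵥ z = (vh ᵥ* M - wstar) ⬝ᵥ z := by
    rw [sub_dotProduct, dotProduct_mulVec]
  intro z hz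
  rw [← sub_eq_zero, error_eq]
  refine dotProduct_eq_zero_of_mem_source_or_orthogonal hST hx (b := vh ᵥ* Bh - wstar)
    (fun i => ?_) (fun s hs => ?_) (fun z hz => ?_) hspan z hz
  · rw [← error_eq, hfit i, sub_self]
  · rw [← error_eq, hpre s hs, sub_self]
  · rw [← error_eq, ← error_eq, horth z hz]
end
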